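/- arXiv:2206.04219 — 2 statements merged into one kernel-verified Lean document; each statement's English description precedes it below -/
import Mathlib

section
/- Maximal excess sets need not have equal cardinality: there exists a finite pattern P ⊂ ℤ² with two excess sets U, V ⊆ P, each maximal with respect to inclusion among excess sets of P, such that |U| ≠ |V|. -/
open Set Relation

/-- Points of the plane lattice. -/
abbrev Pt : Type := ℤ × ℤ

/-- The triangle shape `T = {(0,1),(1,1),(1,0)}`. -/
def Tshape : Set Pt := {(0, 1), (1, 1), (1, 0)}

/-- Translate of a set of points by a vector. -/
def transl (v : Pt) (S : Set Pt) : Set Pt := (fun p => v + p) '' S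

/-- Translate of a finite set of points by a vector. -/
def transF (v : Pt) (S : Finset Pt) : Finset Pt := S.image (fun p => v + p)

/-- A set is filled if every translate of `T` containing at least two of its
points is contained in it. -/
def Filled (F : Set Pt) : Prop :=
  ∀ v : Pt, 2 ≤ (F ∩ transl v Tshape).ncard → transl v Tshape ⊆ F

/-- The fill closure `φ(P)`: smallest filled superset of `P`. -/
def fill (P : Set Pt) : Set Pt := ⋂₀ {F | P ⊆ F ∧ Filled F}

/-- A single triangle solitaire move: if a translate `v + T` contains exactly two
points of `P`, replace one of them by the third point of `v + T`. -/
def Move (P Q : Finset Pt) : Prop :=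
  ∃ v x y : Pt, x ∈ Tshape ∧ y ∈ Tshape ∧ x ≠ y ∧
    v + x ∈ P ∧ v + y ∉ P ∧
    ((P : Set Pt) ∩ transl v Tshape).ncard = 2 ∧
    (Q : Set Pt) = insert (v + y) ((P : Set Pt) \ {v + x})

/-- `Q` is in the solitaire orbit of `P`. -/
def InOrbit (P Q : Finset Pt) : Prop := Relation.ReflTransGen Move P Q

/-- The discrete triangle `T_n = {(a,b) ∈ {0,…,n−1}² : a + b ≥ n − 1}`. -/
def triangle (n : ℕ) : Set Pt :=
  {p | 0 ≤ p.1 ∧ p.1 < (n : ℤ) ∧ 0 ≤ p.2 ∧ p.2 < (n : ℤ) ∧ (n : ℤ) - 1 ≤ p.1 + p.2}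

/-- Neighbourhood of a point: the other points sharing a translate of `T` with it. -/
def nbr (x : Pt) : Set Pt :=
  {y | y ≠ x ∧ ∃ v : Pt, x ∈ transl v Tshape ∧ y ∈ transl v Tshape}

/-- Neighbourhood of a set. -/
def nbrSet (A : Set Pt) : Set Pt := ⋃ a ∈ A, nbr a

/-- Two sets touch if one meets the neighbourhood of the other. -/
def Touch (A B : Set Pt) : Prop := (A ∩ nbrSet B).Nonempty ∨ (B ∩ nbrSet A).Nonempty

/-- `(r, k, v)` is a decomposition of `φ(P)` into pairwise non-touching
translated triangles `vᵢ + T_{kᵢ}`. -/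
def IsDecomp (P : Finset Pt) (r : ℕ) (k : Fin r → ℕ) (v : Fin r → Pt) : Prop :=
  (fill (P : Set Pt) = ⋃ i, transl (v i) (triangle (k i))) ∧
  (∀ i, 1 ≤ k i) ∧
  (∀ i j, i ≠ j → ¬ Touch (transl (v i) (triangle (k i))) (transl (v j) (triangle (k j))))

/-- The horizontal line `L_n = {(a, n−1) : 0 ≤ a ≤ n−1}` (top edge of `T_n`). -/
def lineF (n : ℕ) : Finset Pt :=
  (Finset.range n).image (fun a : ℕ => (((a : ℤ), (n : ℤ) - 1) : Pt))

/-- The vertical edge `{(n−1, b) : 0 ≤ b ≤ n−1}` of `T_n`. -/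
def vlineF (n : ℕ) : Finset Pt :=
  (Finset.range n).image (fun b : ℕ => ((((n : ℤ) - 1), (b : ℤ)) : Pt))

/-- The diagonal edge `{(a, n−1−a) : 0 ≤ a ≤ n−1}` of `T_n`. -/
def dlineF (n : ℕ) : Finset Pt :=
  (Finset.range n).image (fun a : ℕ => (((a : ℤ), (n : ℤ) - 1 - (a : ℤ)) : Pt))

/-- The points of `T_n` below the top line, listed row `n−2` down to row `0`,
each row from right to left. -/
def belowPts (n : ℕ) : List Pt :=
  (List.range (n - 1)).flatMap (fun i =>
    (List.range (n - 1 - i)).map (fun t =>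
      (((n : ℤ) - 1 - (t : ℤ), (n : ℤ) - 2 - (i : ℤ)) : Pt)))

/-- The canonical pattern `P_{n,k}`: the line `L_n` together with the first `k`
points of `T_n \ L_n` in the order: row `n−2` right to left, then row `n−3`, etc. -/
def PnkF (n k : ℕ) : Finset Pt := lineF n ∪ ((belowPts n).take k).toFinset

/-- A TEP family on the triangle shape, with cells ordered `(0,1), (1,1), (1,0)`:
any two of the three symbols determine the third uniquely. -/
def IsTEP {A : Type} (R : Set (A × A × A)) : Prop :=
  (∀ a b : A, ∃! c : A, (a, b, c) ∈ R) ∧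
  (∀ a c : A, ∃! b : A, (a, b, c) ∈ R) ∧
  (∀ b c : A, ∃! a : A, (a, b, c) ∈ R)

/-- A colouring is valid on `T_n` if every translate of `T` inside `T_n`
carries a pattern of `R`. -/
def ValidOn {A : Type} (R : Set (A × A × A)) (n : ℕ) (x : Pt → A) : Prop :=
  ∀ v : Pt, transl v Tshape ⊆ triangle n →
    (x (v + (0, 1)), x (v + (1, 1)), x (v + (1, 0))) ∈ R

/-- One completion step: a translate of `T` inside `T_n` has exactly two
coloured cells; colour the third using the TEP rule `R`. States are pairs
(set of coloured cells, colouring). -/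
def TStep {A : Type} (R : Set (A × A × A)) (n : ℕ)
    (s t : Set Pt × (Pt → A)) : Prop :=
  ∃ v : Pt, transl v Tshape ⊆ triangle n ∧
    ∃ c ∈ transl v Tshape, c ∉ s.1 ∧ transl v Tshape \ {c} ⊆ s.1 ∧
      t.1 = insert c s.1 ∧ (∀ p : Pt, p ≠ c → t.2 p = s.2 p) ∧
      (t.2 (v + (0, 1)), t.2 (v + (1, 1)), t.2 (v + (1, 0))) ∈ R

/-- `P ⊆ T_n` is a basis: for every colouring of `P`, every maximal run of the
iterative completion process covers `T_n` and produces a valid pattern. -/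
def IsBasis {A : Type} (R : Set (A × A × A)) (n : ℕ) (P : Finset Pt) : Prop :=
  (P : Set Pt) ⊆ triangle n ∧
  ∀ q : Pt → A, ∀ s : Set Pt × (Pt → A),
    Relation.ReflTransGen (TStep R n) ((P : Set Pt), q) s →
    (∀ t, ¬ TStep R n s t) →
    triangle n ⊆ s.1 ∧ ValidOn R n s.2


/-! ### Auxiliary machinery for computing fills -/

lemma sub_fill (S : Set Pt) : S ⊆ fill S := fun p hp F hF => hF.1 hp

lemma fill_sub {S F : Set Pt} (hS : S ⊆ F) (hF : Filled F) : fill S ⊆ F :=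
  fun p hp => hp F ⟨hS, hF⟩

lemma fill_mono {S S' : Set Pt} (h : S ⊆ S') : fill S ⊆ fill S' :=
  fun p hp F hF => hp F ⟨h.trans hF.1, hF.2⟩

lemma tshape_finite : Tshape.Finite := by
  unfold Tshape
  exact Set.Finite.insert _ (Set.Finite.insert _ (Set.finite_singleton _))

lemma transl_finite (v : Pt) : (transl v Tshape).Finite := tshape_finite.image _

lemma transl_eq (x y : ℤ) :
    transl (x, y) Tshape = {(x, y+1), (x+1, y+1), (x+1, y)} := by
  unfold transl Tshape
  simp only [Set.image_insert_eq, Set.image_singleton, Prod.mk_add_mk, add_zero, zero_add]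

lemma two_le_ncard {F A : Set Pt} {x y : Pt} (hA : A.Finite)
    (hx : x ∈ F) (hx' : x ∈ A) (hy : y ∈ F) (hy' : y ∈ A) (hxy : x ≠ y) :
    2 ≤ (F ∩ A).ncard := by
  have hsub : ({x, y} : Set Pt) ⊆ F ∩ A := by
    intro p hp
    rcases hp with rfl | hp
    · exact ⟨hx, hx'⟩
    · rcases hp with rfl; exact ⟨hy, hy'⟩
  calc 2 = ({x, y} : Set Pt).ncard := (Set.ncard_pair hxy).symm
    _ ≤ (F ∩ A).ncard := Set.ncard_le_ncard hsub (hA.inter_of_right F)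

lemma filled_fill (S : Set Pt) : Filled (fill S) := by
  intro v hv p hp
  intro F hF
  have hFS : fill S ⊆ F := fun q hq => hq F hF
  have h1 : fill S ∩ transl v Tshape ⊆ F ∩ transl v Tshape :=
    Set.inter_subset_inter_left _ hFS
  have h2 : (F ∩ transl v Tshape).Finite :=
    Set.Finite.subset (transl_finite v) Set.inter_subset_right
  exact hF.2 v (le_trans hv (Set.ncard_le_ncard h1 h2)) hp

lemma filled_of_rules (F : Set Pt)
    (hH : ∀ x y : ℤ, ((x,y):Pt) ∈ F → ((x+1,y):Pt) ∈ F → ((x+1,y-1):Pt) ∈ F)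
    (hV : ∀ x y : ℤ, ((x,y):Pt) ∈ F → ((x,y+1):Pt) ∈ F → ((x-1,y+1):Pt) ∈ F)
    (hD : ∀ x y : ℤ, ((x,y):Pt) ∈ F → ((x+1,y-1):Pt) ∈ F → ((x+1,y):Pt) ∈ F) :
    Filled F := by
  rintro ⟨x, y⟩ hv
  rw [transl_eq] at hv ⊢
  have e1 : y + 1 - 1 = y := by ring
  have e2 : x + 1 - 1 = x := by ring
  have key : ((x,y+1):Pt) ∈ F ∧ ((x+1,y+1):Pt) ∈ F ∧ ((x+1,y):Pt) ∈ F := by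
    by_cases h1 : ((x,y+1):Pt) ∈ F <;> by_cases h2 : ((x+1,y+1):Pt) ∈ F <;>
      by_cases h3 : ((x+1,y):Pt) ∈ F
    · exact ⟨h1, h2, h3⟩
    · have := hH x (y+1) h1 h2; rw [e1] at this; exact ⟨h1, h2, this⟩
    · have := hD x (y+1) h1 (by rwa [e1]); exact ⟨h1, this, h3⟩
    all_goals exfalso
    · -- only h1
      have hsub : F ∩ ({(x,y+1), (x+1,y+1), (x+1,y)} : Set Pt) ⊆ {((x,y+1):Pt)} := by
        rintro p ⟨hpF, hp⟩
        rcases hp with rfl | rfl | rfl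
        · rfl
        · exact absurd hpF h2
        · exact absurd hpF h3
      have := le_trans (Set.ncard_le_ncard hsub (Set.finite_singleton _))
        (le_of_eq (Set.ncard_singleton _))
      omega
    · have := hV (x+1) y h3 h2; rw [e2] at this; exact (h1 this).elim
    · have hsub : F ∩ ({(x,y+1), (x+1,y+1), (x+1,y)} : Set Pt) ⊆ {((x+1,y+1):Pt)} := by
        rintro p ⟨hpF, hp⟩
        rcases hp with rfl | rfl | rfl
        · exact absurd hpF h1
        · rfl
        · exact absurd hpF h3
      have := le_trans (Set.ncard_le_ncard hsub (Set.finite_singleton _))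
        (le_of_eq (Set.ncard_singleton _))
      omega
    · have hsub : F ∩ ({(x,y+1), (x+1,y+1), (x+1,y)} : Set Pt) ⊆ {((x+1,y):Pt)} := by
        rintro p ⟨hpF, hp⟩
        rcases hp with rfl | rfl | rfl
        · exact absurd hpF h1
        · exact absurd hpF h2
        · rfl
      have := le_trans (Set.ncard_le_ncard hsub (Set.finite_singleton _))
        (le_of_eq (Set.ncard_singleton _))
      omega
    · have hsub : F ∩ ({(x,y+1), (x+1,y+1), (x+1,y)} : Set Pt) ⊆ {((x,y+1):Pt)} := by
        rintro p ⟨hpF, hp⟩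
        rcases hp with rfl | rfl | rfl
        · rfl
        · exact absurd hpF h2
        · exact absurd hpF h3
      have := le_trans (Set.ncard_le_ncard hsub (Set.finite_singleton _))
        (le_of_eq (Set.ncard_singleton _))
      omega
  intro p hp
  rcases hp with rfl | rfl | rfl
  · exact key.1
  · exact key.2.1
  · exact key.2.2

lemma filled_triangle7 : Filled (triangle 7) := by
  apply filled_of_rules <;>
    (intro x y h1 h2; simp only [triangle, Set.mem_setOf_eq, Nat.cast_ofNat] at *; omega)

/-- Decidable filledness check for concrete finite sets. -/
def ruleOKF (G : Finset Pt) : Prop :=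
  ∀ p ∈ G, ((p.1+1, p.2) ∈ G → (p.1+1, p.2-1) ∈ G) ∧
    ((p.1, p.2+1) ∈ G → (p.1-1, p.2+1) ∈ G) ∧
    ((p.1+1, p.2-1) ∈ G → (p.1+1, p.2) ∈ G)

instance (G : Finset Pt) : Decidable (ruleOKF G) := by unfold ruleOKF; infer_instance

lemma filled_of_ruleOKF {G : Finset Pt} (h : ruleOKF G) : Filled (G : Set Pt) := by
  apply filled_of_rules
  · intro x y h1 h2
    exact Finset.mem_coe.mpr ((h _ (Finset.mem_coe.mp h1)).1 (Finset.mem_coe.mp h2))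
  · intro x y h1 h2
    exact Finset.mem_coe.mpr ((h _ (Finset.mem_coe.mp h1)).2.1 (Finset.mem_coe.mp h2))
  · intro x y h1 h2
    exact Finset.mem_coe.mpr ((h _ (Finset.mem_coe.mp h1)).2.2 (Finset.mem_coe.mp h2))

lemma genH {S : Set Pt} {a b c d : ℤ} (h1 : ((a,b):Pt) ∈ fill S)
    (h2 : ((c,b):Pt) ∈ fill S) (hc : c = a+1) (hd : d = b-1) :
    ((c,d):Pt) ∈ fill S := by
  subst hc; subst hd
  have e : b - 1 + 1 = b := by ring
  have hsub : transl (a, b-1) Tshape ⊆ fill S := by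
    apply filled_fill S (a, b-1)
    rw [transl_eq, e]
    exact two_le_ncard (Set.Finite.insert _ (Set.Finite.insert _ (Set.finite_singleton _))) h1 (by simp) h2
      (by simp) (by simp [Prod.ext_iff] <;> omega)
  have := hsub (show ((a+1, b-1):Pt) ∈ transl (a, b-1) Tshape by rw [transl_eq, e]; simp)
  exact this

lemma genV {S : Set Pt} {a b c d : ℤ} (h1 : ((a,b):Pt) ∈ fill S)
    (h2 : ((a,c):Pt) ∈ fill S) (hc : c = b+1) (hd : d = a-1) :
    ((d,c):Pt) ∈ fill S := by
  subst hc; subst hd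
  have e : a - 1 + 1 = a := by ring
  have hsub : transl (a-1, b) Tshape ⊆ fill S := by
    apply filled_fill S (a-1, b)
    rw [transl_eq, e]
    exact two_le_ncard (Set.Finite.insert _ (Set.Finite.insert _ (Set.finite_singleton _))) h1 (by simp) h2
      (by simp) (by simp [Prod.ext_iff] <;> omega)
  have := hsub (show ((a-1, b+1):Pt) ∈ transl (a-1, b) Tshape by rw [transl_eq, e]; simp)
  exact this

lemma genD {S : Set Pt} {a b c d : ℤ} (h1 : ((a,b):Pt) ∈ fill S)
    (h2 : ((c,d):Pt) ∈ fill S) (hc : c = a+1) (hd : d = b-1) :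
    ((c,b):Pt) ∈ fill S := by
  subst hc; subst hd
  have e : b - 1 + 1 = b := by ring
  have hsub : transl (a, b-1) Tshape ⊆ fill S := by
    apply filled_fill S (a, b-1)
    rw [transl_eq, e]
    exact two_le_ncard (Set.Finite.insert _ (Set.Finite.insert _ (Set.finite_singleton _))) h1 (by simp) h2
      (by simp) (by simp [Prod.ext_iff] <;> omega)
  have := hsub (show ((a+1, b):Pt) ∈ transl (a, b-1) Tshape by rw [transl_eq, e]; simp)
  exact this

def Pex : Finset Pt := {((0:ℤ),(6:ℤ)), ((1:ℤ),(5:ℤ)), ((1:ℤ),(6:ℤ)), ((2:ℤ),(6:ℤ)), ((3:ℤ),(5:ℤ)), ((3:ℤ),(6:ℤ)), ((4:ℤ),(6:ℤ)), ((5:ℤ),(1:ℤ)), ((5:ℤ),(3:ℤ)), ((5:ℤ),(6:ℤ)), ((6:ℤ),(0:ℤ)), ((6:ℤ),(3:ℤ)), ((6:ℤ),(6:ℤ))}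
def Uex : Finset Pt := {((1:ℤ),(5:ℤ)), ((3:ℤ),(5:ℤ)), ((5:ℤ),(1:ℤ)), ((5:ℤ),(3:ℤ)), ((6:ℤ),(0:ℤ)), ((6:ℤ),(3:ℤ))}
def Vex : Finset Pt := {((1:ℤ),(6:ℤ)), ((2:ℤ),(6:ℤ)), ((4:ℤ),(6:ℤ)), ((5:ℤ),(6:ℤ)), ((6:ℤ),(6:ℤ))}
def S1ex : Finset Pt := {((0:ℤ),(6:ℤ)), ((1:ℤ),(6:ℤ)), ((2:ℤ),(6:ℤ)), ((3:ℤ),(6:ℤ)), ((4:ℤ),(6:ℤ)), ((5:ℤ),(6:ℤ)), ((6:ℤ),(6:ℤ))}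
def S2ex : Finset Pt := {((0:ℤ),(6:ℤ)), ((1:ℤ),(5:ℤ)), ((3:ℤ),(5:ℤ)), ((3:ℤ),(6:ℤ)), ((5:ℤ),(1:ℤ)), ((5:ℤ),(3:ℤ)), ((6:ℤ),(0:ℤ)), ((6:ℤ),(3:ℤ))}
def GU0 : Finset Pt := {((1:ℤ),(6:ℤ)), ((2:ℤ),(5:ℤ)), ((2:ℤ),(6:ℤ)), ((3:ℤ),(4:ℤ)), ((3:ℤ),(5:ℤ)), ((3:ℤ),(6:ℤ)), ((4:ℤ),(3:ℤ)), ((4:ℤ),(4:ℤ)), ((4:ℤ),(5:ℤ)), ((4:ℤ),(6:ℤ)), ((5:ℤ),(2:ℤ)), ((5:ℤ),(3:ℤ)), ((5:ℤ),(4:ℤ)), ((5:ℤ),(5:ℤ)), ((5:ℤ),(6:ℤ)), ((6:ℤ),(1:ℤ)), ((6:ℤ),(2:ℤ)), ((6:ℤ),(3:ℤ)), ((6:ℤ),(4:ℤ)), ((6:ℤ),(5:ℤ)), ((6:ℤ),(6:ℤ))}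
def GU1 : Finset Pt := {((0:ℤ),(6:ℤ)), ((2:ℤ),(6:ℤ)), ((3:ℤ),(5:ℤ)), ((3:ℤ),(6:ℤ)), ((4:ℤ),(4:ℤ)), ((4:ℤ),(5:ℤ)), ((4:ℤ),(6:ℤ)), ((5:ℤ),(3:ℤ)), ((5:ℤ),(4:ℤ)), ((5:ℤ),(5:ℤ)), ((5:ℤ),(6:ℤ)), ((6:ℤ),(2:ℤ)), ((6:ℤ),(3:ℤ)), ((6:ℤ),(4:ℤ)), ((6:ℤ),(5:ℤ)), ((6:ℤ),(6:ℤ))}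
def GU2 : Finset Pt := {((0:ℤ),(6:ℤ)), ((1:ℤ),(5:ℤ)), ((1:ℤ),(6:ℤ)), ((3:ℤ),(6:ℤ)), ((4:ℤ),(5:ℤ)), ((4:ℤ),(6:ℤ)), ((5:ℤ),(4:ℤ)), ((5:ℤ),(5:ℤ)), ((5:ℤ),(6:ℤ)), ((6:ℤ),(3:ℤ)), ((6:ℤ),(4:ℤ)), ((6:ℤ),(5:ℤ)), ((6:ℤ),(6:ℤ))}
def GU3 : Finset Pt := {((0:ℤ),(6:ℤ)), ((1:ℤ),(5:ℤ)), ((1:ℤ),(6:ℤ)), ((2:ℤ),(4:ℤ)), ((2:ℤ),(5:ℤ)), ((2:ℤ),(6:ℤ)), ((4:ℤ),(6:ℤ)), ((5:ℤ),(5:ℤ)), ((5:ℤ),(6:ℤ)), ((6:ℤ),(4:ℤ)), ((6:ℤ),(5:ℤ)), ((6:ℤ),(6:ℤ))}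
def GU4 : Finset Pt := {((0:ℤ),(6:ℤ)), ((1:ℤ),(5:ℤ)), ((1:ℤ),(6:ℤ)), ((2:ℤ),(4:ℤ)), ((2:ℤ),(5:ℤ)), ((2:ℤ),(6:ℤ)), ((3:ℤ),(3:ℤ)), ((3:ℤ),(4:ℤ)), ((3:ℤ),(5:ℤ)), ((3:ℤ),(6:ℤ)), ((5:ℤ),(6:ℤ)), ((6:ℤ),(5:ℤ)), ((6:ℤ),(6:ℤ))}
def GU5 : Finset Pt := {((0:ℤ),(6:ℤ)), ((1:ℤ),(5:ℤ)), ((1:ℤ),(6:ℤ)), ((2:ℤ),(4:ℤ)), ((2:ℤ),(5:ℤ)), ((2:ℤ),(6:ℤ)), ((3:ℤ),(3:ℤ)), ((3:ℤ),(4:ℤ)), ((3:ℤ),(5:ℤ)), ((3:ℤ),(6:ℤ)), ((4:ℤ),(2:ℤ)), ((4:ℤ),(3:ℤ)), ((4:ℤ),(4:ℤ)), ((4:ℤ),(5:ℤ)), ((4:ℤ),(6:ℤ)), ((6:ℤ),(6:ℤ))}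
def GU6 : Finset Pt := {((0:ℤ),(6:ℤ)), ((1:ℤ),(5:ℤ)), ((1:ℤ),(6:ℤ)), ((2:ℤ),(4:ℤ)), ((2:ℤ),(5:ℤ)), ((2:ℤ),(6:ℤ)), ((3:ℤ),(3:ℤ)), ((3:ℤ),(4:ℤ)), ((3:ℤ),(5:ℤ)), ((3:ℤ),(6:ℤ)), ((4:ℤ),(2:ℤ)), ((4:ℤ),(3:ℤ)), ((4:ℤ),(4:ℤ)), ((4:ℤ),(5:ℤ)), ((4:ℤ),(6:ℤ)), ((5:ℤ),(1:ℤ)), ((5:ℤ),(2:ℤ)), ((5:ℤ),(3:ℤ)), ((5:ℤ),(4:ℤ)), ((5:ℤ),(5:ℤ)), ((5:ℤ),(6:ℤ))}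
def GV0 : Finset Pt := {((1:ℤ),(5:ℤ)), ((2:ℤ),(6:ℤ)), ((3:ℤ),(3:ℤ)), ((3:ℤ),(5:ℤ)), ((3:ℤ),(6:ℤ)), ((4:ℤ),(2:ℤ)), ((4:ℤ),(3:ℤ)), ((5:ℤ),(1:ℤ)), ((5:ℤ),(2:ℤ)), ((5:ℤ),(3:ℤ)), ((6:ℤ),(0:ℤ)), ((6:ℤ),(1:ℤ)), ((6:ℤ),(2:ℤ)), ((6:ℤ),(3:ℤ))}
def GV1 : Finset Pt := {((0:ℤ),(6:ℤ)), ((2:ℤ),(6:ℤ)), ((3:ℤ),(3:ℤ)), ((3:ℤ),(5:ℤ)), ((3:ℤ),(6:ℤ)), ((4:ℤ),(2:ℤ)), ((4:ℤ),(3:ℤ)), ((5:ℤ),(1:ℤ)), ((5:ℤ),(2:ℤ)), ((5:ℤ),(3:ℤ)), ((6:ℤ),(0:ℤ)), ((6:ℤ),(1:ℤ)), ((6:ℤ),(2:ℤ)), ((6:ℤ),(3:ℤ))}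
def GV2 : Finset Pt := {((0:ℤ),(6:ℤ)), ((1:ℤ),(5:ℤ)), ((1:ℤ),(6:ℤ)), ((3:ℤ),(3:ℤ)), ((3:ℤ),(6:ℤ)), ((4:ℤ),(2:ℤ)), ((4:ℤ),(3:ℤ)), ((5:ℤ),(1:ℤ)), ((5:ℤ),(2:ℤ)), ((5:ℤ),(3:ℤ)), ((6:ℤ),(0:ℤ)), ((6:ℤ),(1:ℤ)), ((6:ℤ),(2:ℤ)), ((6:ℤ),(3:ℤ))}
def GV3 : Finset Pt := {((0:ℤ),(6:ℤ)), ((1:ℤ),(5:ℤ)), ((1:ℤ),(6:ℤ)), ((3:ℤ),(3:ℤ)), ((3:ℤ),(5:ℤ)), ((4:ℤ),(2:ℤ)), ((4:ℤ),(3:ℤ)), ((5:ℤ),(1:ℤ)), ((5:ℤ),(2:ℤ)), ((5:ℤ),(3:ℤ)), ((6:ℤ),(0:ℤ)), ((6:ℤ),(1:ℤ)), ((6:ℤ),(2:ℤ)), ((6:ℤ),(3:ℤ))}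
def GV4 : Finset Pt := {((0:ℤ),(6:ℤ)), ((1:ℤ),(5:ℤ)), ((1:ℤ),(6:ℤ)), ((2:ℤ),(4:ℤ)), ((2:ℤ),(5:ℤ)), ((2:ℤ),(6:ℤ)), ((3:ℤ),(3:ℤ)), ((3:ℤ),(4:ℤ)), ((3:ℤ),(5:ℤ)), ((3:ℤ),(6:ℤ)), ((5:ℤ),(3:ℤ)), ((6:ℤ),(0:ℤ)), ((6:ℤ),(2:ℤ)), ((6:ℤ),(3:ℤ))}
def GV5 : Finset Pt := {((0:ℤ),(6:ℤ)), ((1:ℤ),(5:ℤ)), ((1:ℤ),(6:ℤ)), ((2:ℤ),(4:ℤ)), ((2:ℤ),(5:ℤ)), ((2:ℤ),(6:ℤ)), ((3:ℤ),(3:ℤ)), ((3:ℤ),(4:ℤ)), ((3:ℤ),(5:ℤ)), ((3:ℤ),(6:ℤ)), ((5:ℤ),(1:ℤ)), ((6:ℤ),(0:ℤ)), ((6:ℤ),(1:ℤ)), ((6:ℤ),(3:ℤ))}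
def GV6 : Finset Pt := {((0:ℤ),(6:ℤ)), ((1:ℤ),(5:ℤ)), ((1:ℤ),(6:ℤ)), ((2:ℤ),(4:ℤ)), ((2:ℤ),(5:ℤ)), ((2:ℤ),(6:ℤ)), ((3:ℤ),(3:ℤ)), ((3:ℤ),(4:ℤ)), ((3:ℤ),(5:ℤ)), ((3:ℤ),(6:ℤ)), ((5:ℤ),(1:ℤ)), ((5:ℤ),(3:ℤ)), ((6:ℤ),(2:ℤ)), ((6:ℤ),(3:ℤ))}
def GV7 : Finset Pt := {((0:ℤ),(6:ℤ)), ((1:ℤ),(5:ℤ)), ((1:ℤ),(6:ℤ)), ((2:ℤ),(4:ℤ)), ((2:ℤ),(5:ℤ)), ((2:ℤ),(6:ℤ)), ((3:ℤ),(3:ℤ)), ((3:ℤ),(4:ℤ)), ((3:ℤ),(5:ℤ)), ((3:ℤ),(6:ℤ)), ((5:ℤ),(1:ℤ)), ((5:ℤ),(3:ℤ)), ((6:ℤ),(0:ℤ)), ((6:ℤ),(1:ℤ))}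

lemma fillP : fill ((Pex : Finset Pt) : Set Pt) = triangle 7 := by
  apply Set.Subset.antisymm
  · refine fill_sub ?_ filled_triangle7
    intro p hp
    rw [Finset.mem_coe] at hp
    fin_cases hp <;> simp only [triangle, Set.mem_setOf_eq, Nat.cast_ofNat] <;> norm_num
  · intro p hp
    obtain ⟨a, b⟩ := p
    simp only [triangle, Set.mem_setOf_eq, Nat.cast_ofNat] at hp
    obtain ⟨ha0, ha7, hb0, hb7, hab⟩ := hp
    have h_0_6 : ((0:ℤ),(6:ℤ)) ∈ fill ((Pex : Finset Pt) : Set Pt) := sub_fill _ (Finset.mem_coe.mpr (by decide))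
    have h_1_5 : ((1:ℤ),(5:ℤ)) ∈ fill ((Pex : Finset Pt) : Set Pt) := sub_fill _ (Finset.mem_coe.mpr (by decide))
    have h_1_6 : ((1:ℤ),(6:ℤ)) ∈ fill ((Pex : Finset Pt) : Set Pt) := sub_fill _ (Finset.mem_coe.mpr (by decide))
    have h_2_6 : ((2:ℤ),(6:ℤ)) ∈ fill ((Pex : Finset Pt) : Set Pt) := sub_fill _ (Finset.mem_coe.mpr (by decide))
    have h_3_5 : ((3:ℤ),(5:ℤ)) ∈ fill ((Pex : Finset Pt) : Set Pt) := sub_fill _ (Finset.mem_coe.mpr (by decide))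
    have h_3_6 : ((3:ℤ),(6:ℤ)) ∈ fill ((Pex : Finset Pt) : Set Pt) := sub_fill _ (Finset.mem_coe.mpr (by decide))
    have h_4_6 : ((4:ℤ),(6:ℤ)) ∈ fill ((Pex : Finset Pt) : Set Pt) := sub_fill _ (Finset.mem_coe.mpr (by decide))
    have h_5_1 : ((5:ℤ),(1:ℤ)) ∈ fill ((Pex : Finset Pt) : Set Pt) := sub_fill _ (Finset.mem_coe.mpr (by decide))
    have h_5_3 : ((5:ℤ),(3:ℤ)) ∈ fill ((Pex : Finset Pt) : Set Pt) := sub_fill _ (Finset.mem_coe.mpr (by decide))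
    have h_5_6 : ((5:ℤ),(6:ℤ)) ∈ fill ((Pex : Finset Pt) : Set Pt) := sub_fill _ (Finset.mem_coe.mpr (by decide))
    have h_6_0 : ((6:ℤ),(0:ℤ)) ∈ fill ((Pex : Finset Pt) : Set Pt) := sub_fill _ (Finset.mem_coe.mpr (by decide))
    have h_6_3 : ((6:ℤ),(3:ℤ)) ∈ fill ((Pex : Finset Pt) : Set Pt) := sub_fill _ (Finset.mem_coe.mpr (by decide))
    have h_6_6 : ((6:ℤ),(6:ℤ)) ∈ fill ((Pex : Finset Pt) : Set Pt) := sub_fill _ (Finset.mem_coe.mpr (by decide))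
    have h_2_5 : ((2:ℤ),(5:ℤ)) ∈ fill ((Pex : Finset Pt) : Set Pt) := genH h_1_6 h_2_6 (by norm_num) (by norm_num)
    have h_4_5 : ((4:ℤ),(5:ℤ)) ∈ fill ((Pex : Finset Pt) : Set Pt) := genH h_3_6 h_4_6 (by norm_num) (by norm_num)
    have h_5_5 : ((5:ℤ),(5:ℤ)) ∈ fill ((Pex : Finset Pt) : Set Pt) := genH h_4_6 h_5_6 (by norm_num) (by norm_num)
    have h_6_1 : ((6:ℤ),(1:ℤ)) ∈ fill ((Pex : Finset Pt) : Set Pt) := genD h_5_1 h_6_0 (by norm_num) (by norm_num)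
    have h_6_2 : ((6:ℤ),(2:ℤ)) ∈ fill ((Pex : Finset Pt) : Set Pt) := genH h_5_3 h_6_3 (by norm_num) (by norm_num)
    have h_6_5 : ((6:ℤ),(5:ℤ)) ∈ fill ((Pex : Finset Pt) : Set Pt) := genH h_5_6 h_6_6 (by norm_num) (by norm_num)
    have h_2_4 : ((2:ℤ),(4:ℤ)) ∈ fill ((Pex : Finset Pt) : Set Pt) := genH h_1_5 h_2_5 (by norm_num) (by norm_num)
    have h_3_4 : ((3:ℤ),(4:ℤ)) ∈ fill ((Pex : Finset Pt) : Set Pt) := genH h_2_5 h_3_5 (by norm_num) (by norm_num)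
    have h_4_4 : ((4:ℤ),(4:ℤ)) ∈ fill ((Pex : Finset Pt) : Set Pt) := genH h_3_5 h_4_5 (by norm_num) (by norm_num)
    have h_5_4 : ((5:ℤ),(4:ℤ)) ∈ fill ((Pex : Finset Pt) : Set Pt) := genH h_4_5 h_5_5 (by norm_num) (by norm_num)
    have h_6_4 : ((6:ℤ),(4:ℤ)) ∈ fill ((Pex : Finset Pt) : Set Pt) := genH h_5_5 h_6_5 (by norm_num) (by norm_num)
    have h_5_2 : ((5:ℤ),(2:ℤ)) ∈ fill ((Pex : Finset Pt) : Set Pt) := genV h_6_1 h_6_2 (by norm_num) (by norm_num)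
    have h_3_3 : ((3:ℤ),(3:ℤ)) ∈ fill ((Pex : Finset Pt) : Set Pt) := genH h_2_4 h_3_4 (by norm_num) (by norm_num)
    have h_4_3 : ((4:ℤ),(3:ℤ)) ∈ fill ((Pex : Finset Pt) : Set Pt) := genH h_3_4 h_4_4 (by norm_num) (by norm_num)
    have h_4_2 : ((4:ℤ),(2:ℤ)) ∈ fill ((Pex : Finset Pt) : Set Pt) := genV h_5_1 h_5_2 (by norm_num) (by norm_num)
    interval_cases a <;> interval_cases b <;> first | assumption | (exfalso; omega)

lemma fillS1 : fill ((S1ex : Finset Pt) : Set Pt) = triangle 7 := by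
  apply Set.Subset.antisymm
  · refine fill_sub ?_ filled_triangle7
    intro p hp
    rw [Finset.mem_coe] at hp
    fin_cases hp <;> simp only [triangle, Set.mem_setOf_eq, Nat.cast_ofNat] <;> norm_num
  · intro p hp
    obtain ⟨a, b⟩ := p
    simp only [triangle, Set.mem_setOf_eq, Nat.cast_ofNat] at hp
    obtain ⟨ha0, ha7, hb0, hb7, hab⟩ := hp
    have h_0_6 : ((0:ℤ),(6:ℤ)) ∈ fill ((S1ex : Finset Pt) : Set Pt) := sub_fill _ (Finset.mem_coe.mpr (by decide))
    have h_1_6 : ((1:ℤ),(6:ℤ)) ∈ fill ((S1ex : Finset Pt) : Set Pt) := sub_fill _ (Finset.mem_coe.mpr (by decide))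
    have h_2_6 : ((2:ℤ),(6:ℤ)) ∈ fill ((S1ex : Finset Pt) : Set Pt) := sub_fill _ (Finset.mem_coe.mpr (by decide))
    have h_3_6 : ((3:ℤ),(6:ℤ)) ∈ fill ((S1ex : Finset Pt) : Set Pt) := sub_fill _ (Finset.mem_coe.mpr (by decide))
    have h_4_6 : ((4:ℤ),(6:ℤ)) ∈ fill ((S1ex : Finset Pt) : Set Pt) := sub_fill _ (Finset.mem_coe.mpr (by decide))
    have h_5_6 : ((5:ℤ),(6:ℤ)) ∈ fill ((S1ex : Finset Pt) : Set Pt) := sub_fill _ (Finset.mem_coe.mpr (by decide))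
    have h_6_6 : ((6:ℤ),(6:ℤ)) ∈ fill ((S1ex : Finset Pt) : Set Pt) := sub_fill _ (Finset.mem_coe.mpr (by decide))
    have h_1_5 : ((1:ℤ),(5:ℤ)) ∈ fill ((S1ex : Finset Pt) : Set Pt) := genH h_0_6 h_1_6 (by norm_num) (by norm_num)
    have h_2_5 : ((2:ℤ),(5:ℤ)) ∈ fill ((S1ex : Finset Pt) : Set Pt) := genH h_1_6 h_2_6 (by norm_num) (by norm_num)
    have h_3_5 : ((3:ℤ),(5:ℤ)) ∈ fill ((S1ex : Finset Pt) : Set Pt) := genH h_2_6 h_3_6 (by norm_num) (by norm_num)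
    have h_4_5 : ((4:ℤ),(5:ℤ)) ∈ fill ((S1ex : Finset Pt) : Set Pt) := genH h_3_6 h_4_6 (by norm_num) (by norm_num)
    have h_5_5 : ((5:ℤ),(5:ℤ)) ∈ fill ((S1ex : Finset Pt) : Set Pt) := genH h_4_6 h_5_6 (by norm_num) (by norm_num)
    have h_6_5 : ((6:ℤ),(5:ℤ)) ∈ fill ((S1ex : Finset Pt) : Set Pt) := genH h_5_6 h_6_6 (by norm_num) (by norm_num)
    have h_2_4 : ((2:ℤ),(4:ℤ)) ∈ fill ((S1ex : Finset Pt) : Set Pt) := genH h_1_5 h_2_5 (by norm_num) (by norm_num)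
    have h_3_4 : ((3:ℤ),(4:ℤ)) ∈ fill ((S1ex : Finset Pt) : Set Pt) := genH h_2_5 h_3_5 (by norm_num) (by norm_num)
    have h_4_4 : ((4:ℤ),(4:ℤ)) ∈ fill ((S1ex : Finset Pt) : Set Pt) := genH h_3_5 h_4_5 (by norm_num) (by norm_num)
    have h_5_4 : ((5:ℤ),(4:ℤ)) ∈ fill ((S1ex : Finset Pt) : Set Pt) := genH h_4_5 h_5_5 (by norm_num) (by norm_num)
    have h_6_4 : ((6:ℤ),(4:ℤ)) ∈ fill ((S1ex : Finset Pt) : Set Pt) := genH h_5_5 h_6_5 (by norm_num) (by norm_num)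
    have h_3_3 : ((3:ℤ),(3:ℤ)) ∈ fill ((S1ex : Finset Pt) : Set Pt) := genH h_2_4 h_3_4 (by norm_num) (by norm_num)
    have h_4_3 : ((4:ℤ),(3:ℤ)) ∈ fill ((S1ex : Finset Pt) : Set Pt) := genH h_3_4 h_4_4 (by norm_num) (by norm_num)
    have h_5_3 : ((5:ℤ),(3:ℤ)) ∈ fill ((S1ex : Finset Pt) : Set Pt) := genH h_4_4 h_5_4 (by norm_num) (by norm_num)
    have h_6_3 : ((6:ℤ),(3:ℤ)) ∈ fill ((S1ex : Finset Pt) : Set Pt) := genH h_5_4 h_6_4 (by norm_num) (by norm_num)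
    have h_4_2 : ((4:ℤ),(2:ℤ)) ∈ fill ((S1ex : Finset Pt) : Set Pt) := genH h_3_3 h_4_3 (by norm_num) (by norm_num)
    have h_5_2 : ((5:ℤ),(2:ℤ)) ∈ fill ((S1ex : Finset Pt) : Set Pt) := genH h_4_3 h_5_3 (by norm_num) (by norm_num)
    have h_6_2 : ((6:ℤ),(2:ℤ)) ∈ fill ((S1ex : Finset Pt) : Set Pt) := genH h_5_3 h_6_3 (by norm_num) (by norm_num)
    have h_5_1 : ((5:ℤ),(1:ℤ)) ∈ fill ((S1ex : Finset Pt) : Set Pt) := genH h_4_2 h_5_2 (by norm_num) (by norm_num)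
    have h_6_1 : ((6:ℤ),(1:ℤ)) ∈ fill ((S1ex : Finset Pt) : Set Pt) := genH h_5_2 h_6_2 (by norm_num) (by norm_num)
    have h_6_0 : ((6:ℤ),(0:ℤ)) ∈ fill ((S1ex : Finset Pt) : Set Pt) := genH h_5_1 h_6_1 (by norm_num) (by norm_num)
    interval_cases a <;> interval_cases b <;> first | assumption | (exfalso; omega)

lemma fillS2 : fill ((S2ex : Finset Pt) : Set Pt) = triangle 7 := by
  apply Set.Subset.antisymm
  · refine fill_sub ?_ filled_triangle7
    intro p hp
    rw [Finset.mem_coe] at hp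
    fin_cases hp <;> simp only [triangle, Set.mem_setOf_eq, Nat.cast_ofNat] <;> norm_num
  · intro p hp
    obtain ⟨a, b⟩ := p
    simp only [triangle, Set.mem_setOf_eq, Nat.cast_ofNat] at hp
    obtain ⟨ha0, ha7, hb0, hb7, hab⟩ := hp
    have h_0_6 : ((0:ℤ),(6:ℤ)) ∈ fill ((S2ex : Finset Pt) : Set Pt) := sub_fill _ (Finset.mem_coe.mpr (by decide))
    have h_1_5 : ((1:ℤ),(5:ℤ)) ∈ fill ((S2ex : Finset Pt) : Set Pt) := sub_fill _ (Finset.mem_coe.mpr (by decide))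
    have h_3_5 : ((3:ℤ),(5:ℤ)) ∈ fill ((S2ex : Finset Pt) : Set Pt) := sub_fill _ (Finset.mem_coe.mpr (by decide))
    have h_3_6 : ((3:ℤ),(6:ℤ)) ∈ fill ((S2ex : Finset Pt) : Set Pt) := sub_fill _ (Finset.mem_coe.mpr (by decide))
    have h_5_1 : ((5:ℤ),(1:ℤ)) ∈ fill ((S2ex : Finset Pt) : Set Pt) := sub_fill _ (Finset.mem_coe.mpr (by decide))
    have h_5_3 : ((5:ℤ),(3:ℤ)) ∈ fill ((S2ex : Finset Pt) : Set Pt) := sub_fill _ (Finset.mem_coe.mpr (by decide))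
    have h_6_0 : ((6:ℤ),(0:ℤ)) ∈ fill ((S2ex : Finset Pt) : Set Pt) := sub_fill _ (Finset.mem_coe.mpr (by decide))
    have h_6_3 : ((6:ℤ),(3:ℤ)) ∈ fill ((S2ex : Finset Pt) : Set Pt) := sub_fill _ (Finset.mem_coe.mpr (by decide))
    have h_1_6 : ((1:ℤ),(6:ℤ)) ∈ fill ((S2ex : Finset Pt) : Set Pt) := genD h_0_6 h_1_5 (by norm_num) (by norm_num)
    have h_2_6 : ((2:ℤ),(6:ℤ)) ∈ fill ((S2ex : Finset Pt) : Set Pt) := genV h_3_5 h_3_6 (by norm_num) (by norm_num)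
    have h_6_1 : ((6:ℤ),(1:ℤ)) ∈ fill ((S2ex : Finset Pt) : Set Pt) := genD h_5_1 h_6_0 (by norm_num) (by norm_num)
    have h_6_2 : ((6:ℤ),(2:ℤ)) ∈ fill ((S2ex : Finset Pt) : Set Pt) := genH h_5_3 h_6_3 (by norm_num) (by norm_num)
    have h_2_5 : ((2:ℤ),(5:ℤ)) ∈ fill ((S2ex : Finset Pt) : Set Pt) := genH h_1_6 h_2_6 (by norm_num) (by norm_num)
    have h_5_2 : ((5:ℤ),(2:ℤ)) ∈ fill ((S2ex : Finset Pt) : Set Pt) := genV h_6_1 h_6_2 (by norm_num) (by norm_num)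
    have h_2_4 : ((2:ℤ),(4:ℤ)) ∈ fill ((S2ex : Finset Pt) : Set Pt) := genH h_1_5 h_2_5 (by norm_num) (by norm_num)
    have h_3_4 : ((3:ℤ),(4:ℤ)) ∈ fill ((S2ex : Finset Pt) : Set Pt) := genH h_2_5 h_3_5 (by norm_num) (by norm_num)
    have h_4_2 : ((4:ℤ),(2:ℤ)) ∈ fill ((S2ex : Finset Pt) : Set Pt) := genV h_5_1 h_5_2 (by norm_num) (by norm_num)
    have h_4_3 : ((4:ℤ),(3:ℤ)) ∈ fill ((S2ex : Finset Pt) : Set Pt) := genV h_5_2 h_5_3 (by norm_num) (by norm_num)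
    have h_3_3 : ((3:ℤ),(3:ℤ)) ∈ fill ((S2ex : Finset Pt) : Set Pt) := genH h_2_4 h_3_4 (by norm_num) (by norm_num)
    have h_4_4 : ((4:ℤ),(4:ℤ)) ∈ fill ((S2ex : Finset Pt) : Set Pt) := genD h_3_4 h_4_3 (by norm_num) (by norm_num)
    have h_4_5 : ((4:ℤ),(5:ℤ)) ∈ fill ((S2ex : Finset Pt) : Set Pt) := genD h_3_5 h_4_4 (by norm_num) (by norm_num)
    have h_4_6 : ((4:ℤ),(6:ℤ)) ∈ fill ((S2ex : Finset Pt) : Set Pt) := genD h_3_6 h_4_5 (by norm_num) (by norm_num)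
    have h_5_4 : ((5:ℤ),(4:ℤ)) ∈ fill ((S2ex : Finset Pt) : Set Pt) := genD h_4_4 h_5_3 (by norm_num) (by norm_num)
    have h_5_5 : ((5:ℤ),(5:ℤ)) ∈ fill ((S2ex : Finset Pt) : Set Pt) := genD h_4_5 h_5_4 (by norm_num) (by norm_num)
    have h_5_6 : ((5:ℤ),(6:ℤ)) ∈ fill ((S2ex : Finset Pt) : Set Pt) := genD h_4_6 h_5_5 (by norm_num) (by norm_num)
    have h_6_4 : ((6:ℤ),(4:ℤ)) ∈ fill ((S2ex : Finset Pt) : Set Pt) := genD h_5_4 h_6_3 (by norm_num) (by norm_num)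
    have h_6_5 : ((6:ℤ),(5:ℤ)) ∈ fill ((S2ex : Finset Pt) : Set Pt) := genD h_5_5 h_6_4 (by norm_num) (by norm_num)
    have h_6_6 : ((6:ℤ),(6:ℤ)) ∈ fill ((S2ex : Finset Pt) : Set Pt) := genD h_5_6 h_6_5 (by norm_num) (by norm_num)
    interval_cases a <;> interval_cases b <;> first | assumption | (exfalso; omega)

lemma contra_helper (W : Finset Pt) (G : Finset Pt)
    (hfill : fill ((Pex \ W : Finset Pt) : Set Pt) = fill ((Pex : Finset Pt) : Set Pt))
    (hsub : ((Pex \ W : Finset Pt) : Set Pt) ⊆ (G : Set Pt))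
    (hG : ruleOKF G) (w : Pt) (hwT : w ∈ triangle 7) (hwG : w ∉ G) : False := by
  have h1 : w ∈ fill ((Pex \ W : Finset Pt) : Set Pt) := by rw [hfill, fillP]; exact hwT
  exact hwG (Finset.mem_coe.mp (fill_sub hsub (filled_of_ruleOKF hG) h1))


/-- maximal excess sets need not have equal cardinality. -/
theorem exists_maximal_excess_sets_of_different_card :
    ∃ (P U V : Finset Pt), U ⊆ P ∧ V ⊆ P ∧
      fill ((P \ U : Finset Pt) : Set Pt) = fill (P : Set Pt) ∧
      fill ((P \ V : Finset Pt) : Set Pt) = fill (P : Set Pt) ∧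
      (∀ W ⊆ P, fill ((P \ W : Finset Pt) : Set Pt) = fill (P : Set Pt) →
        U ⊆ W → W = U) ∧
      (∀ W ⊆ P, fill ((P \ W : Finset Pt) : Set Pt) = fill (P : Set Pt) →
        V ⊆ W → W = V) ∧
      U.card ≠ V.card := by
  refine ⟨Pex, Uex, Vex, by decide, by decide, ?_, ?_, ?_, ?_, by decide⟩
  · rw [show Pex \ Uex = S1ex from by decide, fillS1, fillP]
  · rw [show Pex \ Vex = S2ex from by decide, fillS2, fillP]
  · intro W hWP hfill hUW
    refine Finset.Subset.antisymm ?_ hUW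
    intro x hxW
    by_contra hxU
    exfalso
    have key0 : ∀ q ∈ Pex, q ∉ Uex → q ∈ S1ex := by decide
    have hx : x ∈ S1ex := key0 x (hWP hxW) hxU
    fin_cases hx
    · refine contra_helper W GU0 hfill ?_ (by decide) ((0:ℤ),(6:ℤ))
        (by simp only [triangle, Set.mem_setOf_eq, Nat.cast_ofNat]; norm_num) (by decide)
      intro p hp
      rw [Finset.mem_coe, Finset.mem_sdiff] at hp
      have key : ∀ q ∈ Pex, q ≠ (((0:ℤ),(6:ℤ)) : Pt) → q ∉ Uex → q ∈ GU0 := by decide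
      exact Finset.mem_coe.mpr (key p hp.1 (fun he => hp.2 (he ▸ hxW)) (fun hq => hp.2 (hUW hq)))
    · refine contra_helper W GU1 hfill ?_ (by decide) ((1:ℤ),(5:ℤ))
        (by simp only [triangle, Set.mem_setOf_eq, Nat.cast_ofNat]; norm_num) (by decide)
      intro p hp
      rw [Finset.mem_coe, Finset.mem_sdiff] at hp
      have key : ∀ q ∈ Pex, q ≠ (((1:ℤ),(6:ℤ)) : Pt) → q ∉ Uex → q ∈ GU1 := by decide
      exact Finset.mem_coe.mpr (key p hp.1 (fun he => hp.2 (he ▸ hxW)) (fun hq => hp.2 (hUW hq)))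
    · refine contra_helper W GU2 hfill ?_ (by decide) ((2:ℤ),(4:ℤ))
        (by simp only [triangle, Set.mem_setOf_eq, Nat.cast_ofNat]; norm_num) (by decide)
      intro p hp
      rw [Finset.mem_coe, Finset.mem_sdiff] at hp
      have key : ∀ q ∈ Pex, q ≠ (((2:ℤ),(6:ℤ)) : Pt) → q ∉ Uex → q ∈ GU2 := by decide
      exact Finset.mem_coe.mpr (key p hp.1 (fun he => hp.2 (he ▸ hxW)) (fun hq => hp.2 (hUW hq)))
    · refine contra_helper W GU3 hfill ?_ (by decide) ((3:ℤ),(3:ℤ))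
        (by simp only [triangle, Set.mem_setOf_eq, Nat.cast_ofNat]; norm_num) (by decide)
      intro p hp
      rw [Finset.mem_coe, Finset.mem_sdiff] at hp
      have key : ∀ q ∈ Pex, q ≠ (((3:ℤ),(6:ℤ)) : Pt) → q ∉ Uex → q ∈ GU3 := by decide
      exact Finset.mem_coe.mpr (key p hp.1 (fun he => hp.2 (he ▸ hxW)) (fun hq => hp.2 (hUW hq)))
    · refine contra_helper W GU4 hfill ?_ (by decide) ((4:ℤ),(2:ℤ))
        (by simp only [triangle, Set.mem_setOf_eq, Nat.cast_ofNat]; norm_num) (by decide)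
      intro p hp
      rw [Finset.mem_coe, Finset.mem_sdiff] at hp
      have key : ∀ q ∈ Pex, q ≠ (((4:ℤ),(6:ℤ)) : Pt) → q ∉ Uex → q ∈ GU4 := by decide
      exact Finset.mem_coe.mpr (key p hp.1 (fun he => hp.2 (he ▸ hxW)) (fun hq => hp.2 (hUW hq)))
    · refine contra_helper W GU5 hfill ?_ (by decide) ((5:ℤ),(1:ℤ))
        (by simp only [triangle, Set.mem_setOf_eq, Nat.cast_ofNat]; norm_num) (by decide)
      intro p hp
      rw [Finset.mem_coe, Finset.mem_sdiff] at hp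
      have key : ∀ q ∈ Pex, q ≠ (((5:ℤ),(6:ℤ)) : Pt) → q ∉ Uex → q ∈ GU5 := by decide
      exact Finset.mem_coe.mpr (key p hp.1 (fun he => hp.2 (he ▸ hxW)) (fun hq => hp.2 (hUW hq)))
    · refine contra_helper W GU6 hfill ?_ (by decide) ((6:ℤ),(0:ℤ))
        (by simp only [triangle, Set.mem_setOf_eq, Nat.cast_ofNat]; norm_num) (by decide)
      intro p hp
      rw [Finset.mem_coe, Finset.mem_sdiff] at hp
      have key : ∀ q ∈ Pex, q ≠ (((6:ℤ),(6:ℤ)) : Pt) → q ∉ Uex → q ∈ GU6 := by decide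
      exact Finset.mem_coe.mpr (key p hp.1 (fun he => hp.2 (he ▸ hxW)) (fun hq => hp.2 (hUW hq)))
  · intro W hWP hfill hUW
    refine Finset.Subset.antisymm ?_ hUW
    intro x hxW
    by_contra hxU
    exfalso
    have key0 : ∀ q ∈ Pex, q ∉ Vex → q ∈ S2ex := by decide
    have hx : x ∈ S2ex := key0 x (hWP hxW) hxU
    fin_cases hx
    · refine contra_helper W GV0 hfill ?_ (by decide) ((0:ℤ),(6:ℤ))
        (by simp only [triangle, Set.mem_setOf_eq, Nat.cast_ofNat]; norm_num) (by decide)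
      intro p hp
      rw [Finset.mem_coe, Finset.mem_sdiff] at hp
      have key : ∀ q ∈ Pex, q ≠ (((0:ℤ),(6:ℤ)) : Pt) → q ∉ Vex → q ∈ GV0 := by decide
      exact Finset.mem_coe.mpr (key p hp.1 (fun he => hp.2 (he ▸ hxW)) (fun hq => hp.2 (hUW hq)))
    · refine contra_helper W GV1 hfill ?_ (by decide) ((1:ℤ),(5:ℤ))
        (by simp only [triangle, Set.mem_setOf_eq, Nat.cast_ofNat]; norm_num) (by decide)
      intro p hp
      rw [Finset.mem_coe, Finset.mem_sdiff] at hp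
      have key : ∀ q ∈ Pex, q ≠ (((1:ℤ),(5:ℤ)) : Pt) → q ∉ Vex → q ∈ GV1 := by decide
      exact Finset.mem_coe.mpr (key p hp.1 (fun he => hp.2 (he ▸ hxW)) (fun hq => hp.2 (hUW hq)))
    · refine contra_helper W GV2 hfill ?_ (by decide) ((2:ℤ),(4:ℤ))
        (by simp only [triangle, Set.mem_setOf_eq, Nat.cast_ofNat]; norm_num) (by decide)
      intro p hp
      rw [Finset.mem_coe, Finset.mem_sdiff] at hp
      have key : ∀ q ∈ Pex, q ≠ (((3:ℤ),(5:ℤ)) : Pt) → q ∉ Vex → q ∈ GV2 := by decide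
      exact Finset.mem_coe.mpr (key p hp.1 (fun he => hp.2 (he ▸ hxW)) (fun hq => hp.2 (hUW hq)))
    · refine contra_helper W GV3 hfill ?_ (by decide) ((2:ℤ),(4:ℤ))
        (by simp only [triangle, Set.mem_setOf_eq, Nat.cast_ofNat]; norm_num) (by decide)
      intro p hp
      rw [Finset.mem_coe, Finset.mem_sdiff] at hp
      have key : ∀ q ∈ Pex, q ≠ (((3:ℤ),(6:ℤ)) : Pt) → q ∉ Vex → q ∈ GV3 := by decide
      exact Finset.mem_coe.mpr (key p hp.1 (fun he => hp.2 (he ▸ hxW)) (fun hq => hp.2 (hUW hq)))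
    · refine contra_helper W GV4 hfill ?_ (by decide) ((4:ℤ),(2:ℤ))
        (by simp only [triangle, Set.mem_setOf_eq, Nat.cast_ofNat]; norm_num) (by decide)
      intro p hp
      rw [Finset.mem_coe, Finset.mem_sdiff] at hp
      have key : ∀ q ∈ Pex, q ≠ (((5:ℤ),(1:ℤ)) : Pt) → q ∉ Vex → q ∈ GV4 := by decide
      exact Finset.mem_coe.mpr (key p hp.1 (fun he => hp.2 (he ▸ hxW)) (fun hq => hp.2 (hUW hq)))
    · refine contra_helper W GV5 hfill ?_ (by decide) ((4:ℤ),(2:ℤ))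
        (by simp only [triangle, Set.mem_setOf_eq, Nat.cast_ofNat]; norm_num) (by decide)
      intro p hp
      rw [Finset.mem_coe, Finset.mem_sdiff] at hp
      have key : ∀ q ∈ Pex, q ≠ (((5:ℤ),(3:ℤ)) : Pt) → q ∉ Vex → q ∈ GV5 := by decide
      exact Finset.mem_coe.mpr (key p hp.1 (fun he => hp.2 (he ▸ hxW)) (fun hq => hp.2 (hUW hq)))
    · refine contra_helper W GV6 hfill ?_ (by decide) ((4:ℤ),(2:ℤ))
        (by simp only [triangle, Set.mem_setOf_eq, Nat.cast_ofNat]; norm_num) (by decide)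
      intro p hp
      rw [Finset.mem_coe, Finset.mem_sdiff] at hp
      have key : ∀ q ∈ Pex, q ≠ (((6:ℤ),(0:ℤ)) : Pt) → q ∉ Vex → q ∈ GV6 := by decide
      exact Finset.mem_coe.mpr (key p hp.1 (fun he => hp.2 (he ▸ hxW)) (fun hq => hp.2 (hUW hq)))
    · refine contra_helper W GV7 hfill ?_ (by decide) ((4:ℤ),(2:ℤ))
        (by simp only [triangle, Set.mem_setOf_eq, Nat.cast_ofNat]; norm_num) (by decide)
      intro p hp
      rw [Finset.mem_coe, Finset.mem_sdiff] at hp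
      have key : ∀ q ∈ Pex, q ≠ (((6:ℤ),(3:ℤ)) : Pt) → q ∉ Vex → q ∈ GV7 := by decide
      exact Finset.mem_coe.mpr (key p hp.1 (fun he => hp.2 (he ▸ hxW)) (fun hq => hp.2 (hUW hq)))
end

section
/- The solitaire orbit of the line L_n contains at least 3·n! − 3 patterns for n ≥ 2. Specifically, for each of the three corners of T_n, choosing one point from each of the n lattice lines of T_n parallel to the edge opposite that corner yields an element of the orbit of L_n, and the only patterns obtainable in this way from two different corners are the three edges of T_n. -/
open Set Relation

/-!
By induction on `n`, every pattern choosing one point in each column of `T_n` lies in the orbit of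
the top edge `L_n`. In `T_{n+1}` the first `n` columns hold a copy of `T_n` raised by one row,
whose moves never involve the point of the last column; that point is lowered one row at a time,
each time after rearranging the first `n` columns so that column `n - 1` is at its height.

The rotation `ρ` of order three about the centre of `T_n` maps translates of `T` to translates of
`T`, hence commutes with moves. It maps `L_n` to the diagonal edge, itself a column transversal,
so the orbit of `L_n` is `ρ`-invariant: besides the `n!` column transversals `A` it contains the
row transversals `ρ A` and the antidiagonal transversals `ρ² A`. A column transversal that is also
a row transversal has pairwise distinct heights, which forces it to be the diagonal edge; rotating,
any two of the three families meet only in an edge of `T_n`, and inclusion–exclusion gives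
`3 · n! - 3`.
-/

open scoped Pointwise

lemma mem_transl_Tshape {v p : Pt} :
    p ∈ transl v Tshape ↔ p = v + (0, 1) ∨ p = v + (1, 1) ∨ p = v + (1, 0) := by
  constructor
  · rintro ⟨q, hq, rfl⟩
    rcases hq with rfl | rfl | rfl <;> simp
  · rintro (rfl | rfl | rfl) <;> exact ⟨_, by simp [Tshape], rfl⟩

lemma transl_Tshape (v : Pt) : transl v Tshape = {v + (0, 1), v + (1, 1), v + (1, 0)} := by
  ext p; simp [mem_transl_Tshape]

def PreservesTriangles (f : Pt → Pt) : Prop :=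
  ∀ v, ∃ w, f '' transl v Tshape = transl w Tshape

lemma preservesTriangles_add_left (u : Pt) : PreservesTriangles (u + ·) :=
  fun v => ⟨u + v, by simp only [transl, Set.image_image, add_assoc]⟩

namespace Move

variable {P Q : Finset Pt}

protected lemma symm (h : Move P Q) : Move Q P := by
  obtain ⟨v, x, y, hx, hy, hxy, hvxP, hvyP, hcard, hQ⟩ := h
  have hvxT : v + x ∈ transl v Tshape := ⟨x, hx, rfl⟩
  have hvyT : v + y ∈ transl v Tshape := ⟨y, hy, rfl⟩
  have hvyx : v + y ≠ v + x := fun h => hxy (add_left_cancel h).symm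
  refine ⟨v, y, x, hy, hx, hxy.symm, ?_, ?_, ?_, ?_⟩
  · simpa using congrArg (v + y ∈ ·) hQ
  · simpa [hvyx.symm] using congrArg (v + x ∈ ·) hQ
  · have hfin : ((P : Set Pt) ∩ transl v Tshape).Finite := P.finite_toSet.inter_of_left _
    rw [hQ, Set.insert_inter_of_mem hvyT, Set.sdiff_inter_right_comm,
      Set.ncard_insert_of_notMem (fun h => hvyP h.1.1) hfin.sdiff,
      Set.ncard_sdiff_singleton_add_one (Set.mem_inter (Finset.mem_coe.2 hvxP) hvxT) hfin, hcard]
  · rw [hQ, Set.insert_sdiff_of_mem _ (Set.mem_singleton _),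
      Set.sdiff_singleton_eq_self (fun h => hvyP (by exact_mod_cast h.1)),
      Set.insert_sdiff_singleton, Set.insert_eq_self.mpr (by exact_mod_cast hvxP)]

lemma image {f : Pt → Pt} (hf : Function.Injective f) (hT : PreservesTriangles f)
    (h : Move P Q) : Move (P.image f) (Q.image f) := by
  obtain ⟨v, x, y, hx, hy, hxy, hvxP, hvyP, hcard, hQ⟩ := h
  obtain ⟨w, hw⟩ := hT v
  obtain ⟨x', hx', hfx⟩ : f (v + x) ∈ transl w Tshape := hw ▸ ⟨v + x, ⟨x, hx, rfl⟩, rfl⟩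
  obtain ⟨y', hy', hfy⟩ : f (v + y) ∈ transl w Tshape := hw ▸ ⟨v + y, ⟨y, hy, rfl⟩, rfl⟩
  dsimp only at hfx hfy
  refine ⟨w, x', y', hx', hy', ?_, ?_, ?_, ?_, ?_⟩
  · rintro rfl
    exact hxy (add_left_cancel (hf (hfx.symm.trans hfy)))
  · rw [hfx]; exact Finset.mem_image_of_mem f hvxP
  · rw [hfy, hf.mem_finset_image]; exact hvyP
  · rw [Finset.coe_image, ← hw, ← Set.image_inter hf, Set.ncard_image_of_injective _ hf, hcard]
  · rw [Finset.coe_image, Finset.coe_image, hQ, Set.image_insert_eq, Set.image_sdiff hf,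
      Set.image_singleton, hfx, hfy]

/-- A point strictly to the right of all of `P` lies in no translate of `T` met twice by `P`. -/
lemma insert_of_lt {r : Pt} (h : Move P Q) (hr : ∀ p ∈ P, p.1 < r.1) :
    Move (insert r P) (insert r Q) := by
  obtain ⟨v, x, y, hx, hy, hxy, hvxP, hvyP, hcard, hQ⟩ := h
  have hrT : r ∉ transl v Tshape := by
    obtain ⟨a, b, hab, hs⟩ := Set.ncard_eq_two.mp hcard
    have ha : a ∈ (P : Set Pt) ∩ transl v Tshape := hs ▸ by simp
    have hb : b ∈ (P : Set Pt) ∩ transl v Tshape := hs ▸ by simp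
    have har := hr a ha.1
    have hbr := hr b hb.1
    replace ha := mem_transl_Tshape.mp ha.2
    replace hb := mem_transl_Tshape.mp hb.2
    rw [mem_transl_Tshape]
    simp only [Prod.ext_iff, Prod.fst_add, Prod.snd_add, ne_eq] at ha hb hab har hbr ⊢
    omega
  have hrx : r ≠ v + x := fun h => hrT (h ▸ ⟨x, hx, rfl⟩)
  have hry : r ≠ v + y := fun h => hrT (h ▸ ⟨y, hy, rfl⟩)
  refine ⟨v, x, y, hx, hy, hxy, Finset.mem_insert_of_mem hvxP, ?_, ?_, ?_⟩
  · simpa [hry.symm] using hvyP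
  · rwa [Finset.coe_insert, Set.insert_inter_of_notMem hrT]
  · rw [Finset.coe_insert, Finset.coe_insert, hQ,
      Set.insert_sdiff_of_notMem _ (Set.mem_singleton_iff.not.mpr hrx), Set.insert_comm]

/-- The rightmost point `(c, y)` slides down along the translate of `T` at `(c - 1, y - 1)`. -/
lemma insert_down {R : Finset Pt} {c y : ℤ} (hR : ∀ p ∈ R, p.1 < c) (hmem : (c - 1, y) ∈ R) :
    Move (insert (c, y) R) (insert (c, y - 1) R) := by
  have hnot : ∀ z : ℤ, (c, z) ∉ R := fun z hz => (hR _ hz).false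
  refine ⟨(c - 1, y - 1), (1, 1), (1, 0), by simp [Tshape], by simp [Tshape], by simp,
    ?_, ?_, ?_, ?_⟩
  · simp
  · simp [hnot]
  · have hs : (insert (c, y) R : Set Pt) ∩ transl (c - 1, y - 1) Tshape = {(c - 1, y), (c, y)} := by
      ext ⟨p1, p2⟩
      simp only [Set.mem_inter_iff, Set.mem_insert_iff, Finset.mem_coe, mem_transl_Tshape,
        Set.mem_singleton_iff, Prod.ext_iff, Prod.fst_add, Prod.snd_add]
      constructor
      · rintro ⟨h | h, hT⟩
        · omega
        · have := hR _ h; simp only at this; omega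
      · rintro (⟨rfl, rfl⟩ | ⟨rfl, rfl⟩)
        · exact ⟨Or.inr hmem, Or.inl ⟨by ring, by ring⟩⟩
        · exact ⟨Or.inl ⟨rfl, rfl⟩, Or.inr (Or.inl ⟨by ring, by ring⟩)⟩
    rw [Finset.coe_insert, hs, Set.ncard_pair (by simp)]
  · have h1 : ((c - 1, y - 1) : Pt) + (1, 1) = (c, y) := by ext <;> simp
    have h2 : ((c - 1, y - 1) : Pt) + (1, 0) = (c, y - 1) := by ext <;> simp
    rw [h1, h2, Finset.coe_insert, Finset.coe_insert, Set.insert_sdiff_self_of_notMem (hnot y)]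

end Move

lemma InOrbit.image {f : Pt → Pt} (hf : Function.Injective f) (hT : PreservesTriangles f)
    {P Q : Finset Pt} (h : InOrbit P Q) : InOrbit (P.image f) (Q.image f) :=
  ReflTransGen.lift (Finset.image f) (fun _ _ hPQ => Move.image hf hT hPQ) _ _ h

/-- Confining moves to a half-plane `x < c` keeps a point added in column `c` out of their way. -/
def MoveIn (S : Set Pt) (P Q : Finset Pt) : Prop := Move P Q ∧ ↑P ⊆ S ∧ ↑Q ⊆ S

namespace MoveIn

variable {S : Set Pt} {P Q : Finset Pt}

instance : Std.Symm (MoveIn S) := ⟨fun _ _ h => ⟨h.1.symm, h.2.2, h.2.1⟩⟩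

lemma image {S' : Set Pt} {f : Pt → Pt} (hf : Function.Injective f) (hT : PreservesTriangles f)
    (hS : Set.MapsTo f S S') (h : MoveIn S P Q) : MoveIn S' (P.image f) (Q.image f) := by
  refine ⟨h.1.image hf hT, ?_, ?_⟩ <;> rw [Finset.coe_image]
  exacts [hS.image_subset.trans' (Set.image_mono h.2.1),
    hS.image_subset.trans' (Set.image_mono h.2.2)]

lemma insert_right {c y : ℤ} (h : MoveIn {p | p.1 < c} P Q) :
    MoveIn {p | p.1 < c + 1} (insert (c, y) P) (insert (c, y) Q) := by
  obtain ⟨h, hP, hQ⟩ := h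
  have widen : ∀ {R : Finset Pt}, ↑R ⊆ {p : Pt | p.1 < c} →
      ↑(insert (c, y) R) ⊆ {p : Pt | p.1 < c + 1} := fun hR => by
    rw [Finset.coe_insert, Set.insert_subset_iff]
    exact ⟨by simp, fun p hp => (hR hp).trans (lt_add_one c)⟩
  exact ⟨h.insert_of_lt fun p hp => hP hp, widen hP, widen hQ⟩

end MoveIn

def colPattern (n : ℕ) (h : ℕ → ℤ) : Finset Pt :=
  (Finset.range n).image fun a : ℕ => ((a : ℤ), h a)

def ValidHeights (n : ℕ) (h : ℕ → ℤ) : Prop :=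
  ∀ a < n, ((a : ℤ), h a) ∈ triangle n

section colPattern

variable {n : ℕ} {g h : ℕ → ℤ}

lemma mem_colPattern {p : Pt} : p ∈ colPattern n h ↔ ∃ a < n, ((a : ℤ), h a) = p := by
  simp [colPattern]

lemma colPattern_congr (hgh : ∀ a < n, g a = h a) : colPattern n g = colPattern n h :=
  Finset.image_congr fun a ha => by simp [hgh a (Finset.mem_range.mp ha)]

lemma eq_of_colPattern_eq (hgh : colPattern n g = colPattern n h) : ∀ a < n, g a = h a := by
  intro a ha
  obtain ⟨b, -, hb⟩ := mem_colPattern.mp (hgh ▸ mem_colPattern.mpr ⟨a, ha, rfl⟩)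
  simp only [Prod.ext_iff, Nat.cast_inj] at hb
  rw [← hb.2, hb.1]

lemma colPattern_succ : colPattern (n + 1) h = insert ((n : ℤ), h n) (colPattern n h) := by
  simp [colPattern, Finset.range_add_one, Finset.image_insert]

lemma image_add_colPattern :
    (colPattern n h).image (((0, 1) : Pt) + ·) = colPattern n (h + 1) := by
  simp only [colPattern, Finset.image_image]
  exact Finset.image_congr fun a _ => by simp [add_comm]

lemma coe_colPattern_subset : ↑(colPattern n h) ⊆ {p : Pt | p.1 < n} := by
  intro p hp
  obtain ⟨a, ha, rfl⟩ := mem_colPattern.mp hp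
  simpa using ha

lemma ValidHeights.sub_one (hh : ValidHeights (n + 1) h) : ValidHeights n (h - 1) := by
  intro a ha
  have := hh a (by omega)
  simp only [triangle, Set.mem_ofPred_eq, Pi.sub_apply, Pi.one_apply] at this ⊢
  push_cast at this
  omega

lemma reflTransGen_colPattern_succ {g' : ℕ → ℤ}
    (hgg' : ReflTransGen (MoveIn {p | p.1 < n}) (colPattern n (g - 1)) (colPattern n (g' - 1)))
    (hlast : g n = g' n) :
    ReflTransGen (MoveIn {p | p.1 < (n + 1 : ℕ)})
      (colPattern (n + 1) g) (colPattern (n + 1) g') := by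
  have hmaps : Set.MapsTo (((0, 1) : Pt) + ·) {p | p.1 < n} {p | p.1 < n} :=
    fun p hp => by simpa using hp
  have raised : ReflTransGen (MoveIn {p | p.1 < n}) (colPattern n g) (colPattern n g') := by
    simpa only [Function.onFun, image_add_colPattern, sub_add_cancel] using
      hgg'.lift (fun P => P.image (((0, 1) : Pt) + ·)) fun P Q hPQ =>
        hPQ.image (add_right_injective _) (preservesTriangles_add_left _) hmaps
  rw [colPattern_succ, colPattern_succ, ← hlast, Nat.cast_succ]
  exact raised.lift _ fun P Q hPQ => hPQ.insert_right

lemma moveIn_colPattern_succ_update (hn : 0 < n) (hg : g (n - 1) = g n) :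
    MoveIn {p | p.1 < (n + 1 : ℕ)} (colPattern (n + 1) g)
      (colPattern (n + 1) (Function.update g n (g n - 1))) := by
  have hbelow : colPattern n (Function.update g n (g n - 1)) = colPattern n g :=
    colPattern_congr fun a ha => Function.update_of_ne ha.ne _ _
  rw [colPattern_succ, colPattern_succ, Function.update_self, hbelow]
  refine ⟨Move.insert_down (fun p hp => coe_colPattern_subset hp) ?_, ?_, ?_⟩
  · refine mem_colPattern.mpr ⟨n - 1, by omega, ?_⟩
    rw [hg, Nat.cast_pred hn]
  all_goals
    rw [Finset.coe_insert, Set.insert_subset_iff]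
    exact ⟨by simp, coe_colPattern_subset.trans fun p hp => by simp at hp ⊢; omega⟩

end colPattern

lemma lineF_eq_colPattern (n : ℕ) : lineF n = colPattern n fun _ => (n : ℤ) - 1 := rfl

lemma validHeights_lineF (n : ℕ) : ValidHeights n fun _ => (n : ℤ) - 1 := by
  intro a ha
  simp only [triangle, Set.mem_ofPred_eq]
  omega

theorem reflTransGen_lineF_colPattern :
    ∀ (n : ℕ) (h : ℕ → ℤ), ValidHeights n h →
      ReflTransGen (MoveIn {p | p.1 < n}) (lineF n) (colPattern n h)
  | 0, h, _ => by
    rw [lineF_eq_colPattern, colPattern_congr fun a ha => absurd ha a.not_lt_zero]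
  | n + 1, h, hh => by
    have rearrange : ∀ {g g' : ℕ → ℤ}, ValidHeights (n + 1) g → ValidHeights (n + 1) g' →
        g n = g' n → ReflTransGen (MoveIn {p | p.1 < (n + 1 : ℕ)})
          (colPattern (n + 1) g) (colPattern (n + 1) g') := fun hg hg' hlast =>
      reflTransGen_colPattern_succ
        ((symm (reflTransGen_lineF_colPattern n _ hg.sub_one)).trans
          (reflTransGen_lineF_colPattern n _ hg'.sub_one)) hlast
    have lower : ∀ y ≤ (n : ℤ), 0 ≤ y → ∀ g, ValidHeights (n + 1) g → g n = y →
        ReflTransGen (MoveIn {p | p.1 < (n + 1 : ℕ)}) (lineF (n + 1)) (colPattern (n + 1) g) := by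
      intro y hy
      induction y, hy using Int.leInductionDown with
      | base => exact fun _ g hg hgn => rearrange (validHeights_lineF _) hg (by push_cast; omega)
      | pred y hy ih =>
        intro hy0 g hg hgn
        let g' : ℕ → ℤ := fun a => if a + 1 < n then n else y
        have hg' : ValidHeights (n + 1) g' := by
          intro a ha
          simp only [triangle, Set.mem_ofPred_eq, g']
          split_ifs <;> omega
        have hg'n : g' n = y := by simp [g']
        have hlowered : ValidHeights (n + 1) (Function.update g' n (y - 1)) := by
          intro a ha
          rcases eq_or_ne a n with rfl | han
          · simp only [Function.update_self, triangle, Set.mem_ofPred_eq]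
            push_cast
            omega
          · rw [Function.update_of_ne han]
            exact hg' a ha
        have hstep := moveIn_colPattern_succ_update (n := n) (g := g') (by omega)
          (by simp only [g']; split_ifs <;> omega)
        rw [hg'n] at hstep
        exact ((ih (by omega) g' hg' hg'n).tail hstep).trans
          (rearrange hlowered hg (by rw [Function.update_self, hgn]))
    have hlast := hh n n.lt_succ_self
    simp only [triangle, Set.mem_ofPred_eq] at hlast
    push_cast at hlast
    exact lower (h n) (by omega) (by omega) h hh rfl

/-- The patterns meeting each column `{a} × [n - 1 - a, n - 1]` of `T_n` in exactly one point. -/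
noncomputable def colTransversals (n : ℕ) : Finset (Finset Pt) :=
  (Fintype.piFinset fun a : Fin n => Finset.Icc ((n : ℤ) - 1 - a) (n - 1)).image
    fun h => colPattern n fun a => if ha : a < n then h ⟨a, ha⟩ else 0

lemma mem_colTransversals {n : ℕ} {P : Finset Pt} :
    P ∈ colTransversals n ↔ ∃ h, ValidHeights n h ∧ colPattern n h = P := by
  have hcol : ∀ (a : ℕ) (y : ℤ), ((a : ℤ), y) ∈ triangle n ↔
      a < n ∧ y ∈ Finset.Icc ((n : ℤ) - 1 - a) (n - 1) := by
    intro a y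
    simp only [triangle, Set.mem_ofPred_eq, Finset.mem_Icc]
    omega
  simp only [colTransversals, Finset.mem_image, Fintype.mem_piFinset]
  constructor
  · rintro ⟨h, hh, rfl⟩
    refine ⟨_, fun a ha => ?_, rfl⟩
    rw [hcol]
    exact ⟨ha, by simpa [ha] using hh ⟨a, ha⟩⟩
  · rintro ⟨h, hh, rfl⟩
    refine ⟨fun a => h a, fun a => ((hcol a _).mp (hh a a.2)).2, colPattern_congr ?_⟩
    intro a ha
    simp [ha]

lemma card_colTransversals (n : ℕ) : (colTransversals n).card = n.factorial := by
  rw [colTransversals, Finset.card_image_of_injOn, Fintype.card_piFinset]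
  · simp only [Int.card_Icc, ← Finset.prod_range_add_one_eq_factorial]
    rw [← Fin.prod_univ_eq_prod_range]
    exact Finset.prod_congr rfl fun a _ => by omega
  · intro g _ h _ hgh
    funext a
    simpa using eq_of_colPattern_eq hgh a a.2

lemma lineF_mem_colTransversals (n : ℕ) : lineF n ∈ colTransversals n :=
  mem_colTransversals.mpr ⟨_, validHeights_lineF n, rfl⟩

lemma dlineF_mem_colTransversals (n : ℕ) : dlineF n ∈ colTransversals n := by
  refine mem_colTransversals.mpr ⟨fun a => (n : ℤ) - 1 - a, fun a ha => ?_, rfl⟩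
  simp only [triangle, Set.mem_ofPred_eq]
  omega

lemma inOrbit_lineF_of_mem_colTransversals {n : ℕ} {P : Finset Pt} (hP : P ∈ colTransversals n) :
    InOrbit (lineF n) P := by
  obtain ⟨h, hh, rfl⟩ := mem_colTransversals.mp hP
  exact ReflTransGen.mono (fun _ _ hPQ => hPQ.1) _ _ (reflTransGen_lineF_colPattern n h hh)

/-- Rotation by a third of a turn about the centre of `T_n`: it maps `T_n` onto itself, cycling
its corners, and sends columns to rows and rows to antidiagonals. -/
def rot (n : ℕ) : Equiv.Perm Pt where
  toFun p := (2 * n - 2 - p.1 - p.2, p.1)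
  invFun p := (p.2, 2 * n - 2 - p.1 - p.2)
  left_inv p := by ext <;> simp; ring
  right_inv p := by ext <;> simp

section rot

variable {n : ℕ}

lemma rot_pow_three (n : ℕ) : rot n ^ 3 = 1 := by
  ext p <;> simp [pow_succ, rot] <;> ring

lemma preservesTriangles_rot (n : ℕ) : PreservesTriangles (rot n) := by
  intro v
  refine ⟨(2 * n - 4 - v.1 - v.2, v.1), ?_⟩
  rw [transl_Tshape, transl_Tshape, Set.image_insert_eq, Set.image_insert_eq, Set.image_singleton]
  ext ⟨p1, p2⟩
  simp only [rot, Equiv.coe_fn_mk, Set.mem_insert_iff, Set.mem_singleton_iff, Prod.ext_iff,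
    Prod.fst_add, Prod.snd_add]
  omega

lemma rot_smul_lineF (n : ℕ) : rot n • lineF n = dlineF n := by
  ext ⟨p1, p2⟩
  simp only [Finset.mem_smul_finset, lineF, dlineF, Finset.mem_image, Finset.mem_range,
    Equiv.Perm.smul_def, rot, Equiv.coe_fn_mk, Prod.ext_iff, Prod.exists]
  constructor
  · rintro ⟨_, _, ⟨a, ha, rfl, rfl⟩, rfl, rfl⟩
    exact ⟨n - 1 - a, by omega, by omega, by omega⟩
  · rintro ⟨a, ha, rfl, rfl⟩
    exact ⟨_, _, ⟨n - 1 - a, by omega, rfl, rfl⟩, by omega, by omega⟩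

lemma rot_smul_dlineF_ne (hn : 2 ≤ n) : rot n • dlineF n ≠ dlineF n := by
  intro h
  have hcorner : ((0 : ℤ), (n : ℤ) - 1) ∈ dlineF n :=
    Finset.mem_image.mpr ⟨0, by simp; omega, by simp⟩
  rw [← h] at hcorner
  simp only [Finset.mem_smul_finset, dlineF, Finset.mem_image, Finset.mem_range,
    Equiv.Perm.smul_def, rot, Equiv.coe_fn_mk, Prod.ext_iff, Prod.exists] at hcorner
  obtain ⟨_, _, ⟨a, -, rfl, rfl⟩, h1, h2⟩ := hcorner
  omega

lemma InOrbit.rot_smul {P : Finset Pt} (hP : InOrbit (lineF n) P) :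
    InOrbit (lineF n) (rot n • P) := by
  have hline : InOrbit (lineF n) (rot n • lineF n) :=
    rot_smul_lineF n ▸ inOrbit_lineF_of_mem_colTransversals (dlineF_mem_colTransversals n)
  have hsmul : ∀ Q : Finset Pt, rot n • Q = Q.image (rot n) := fun _ => rfl
  rw [hsmul] at hline ⊢
  exact ReflTransGen.trans hline (hP.image (rot n).injective (preservesTriangles_rot n))

end rot

lemma eq_sub_of_injOn_of_mem_Icc {n : ℕ} {x : ℕ → ℤ}
    (hx : ∀ a < n, x a ∈ Set.Icc ((n : ℤ) - 1 - a) (n - 1)) (hinj : Set.InjOn x (Set.Iio n)) :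
    ∀ a < n, x a = n - 1 - a := by
  intro a
  induction a using Nat.strong_induction_on with
  | _ a ih =>
    intro ha
    obtain ⟨hlo, hhi⟩ := hx a ha
    by_contra hne
    -- otherwise `b := n - 1 - x a < a` already takes the value `x b = n - 1 - b = x a`
    have hb := Int.toNat_of_nonneg (show 0 ≤ (n : ℤ) - 1 - x a by omega)
    have hab := hinj (show (n - 1 - x a).toNat < n by omega) (show a < n from ha)
      (by rw [ih _ (by omega) (by omega)]; omega)
    omega

lemma colTransversals_inter_rot_smul (n : ℕ) :
    colTransversals n ∩ rot n • colTransversals n = {dlineF n} := by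
  ext P
  rw [Finset.mem_inter, Finset.mem_singleton]
  constructor
  · rintro ⟨hA, hB⟩
    obtain ⟨h, hh, rfl⟩ := mem_colTransversals.mp hA
    obtain ⟨Q, hQ, hQP⟩ := Finset.mem_smul_finset.mp hB
    obtain ⟨g, -, rfl⟩ := mem_colTransversals.mp hQ
    have hrow : ∀ a < n, ∃ b : ℕ, (b : ℤ) = h a ∧ 2 * (n : ℤ) - 2 - b - g b = a := by
      intro a ha
      have hmem : ((a : ℤ), h a) ∈ rot n • colPattern n g := hQP ▸ mem_colPattern.mpr ⟨a, ha, rfl⟩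
      obtain ⟨_, hy, hya⟩ := Finset.mem_smul_finset.mp hmem
      obtain ⟨b, -, rfl⟩ := mem_colPattern.mp hy
      simp only [Equiv.Perm.smul_def, rot, Equiv.coe_fn_mk, Prod.ext_iff] at hya
      exact ⟨b, hya.2, hya.1⟩
    have hinj : Set.InjOn h (Set.Iio n) := by
      intro a ha a' ha' he
      obtain ⟨b, hb, hba⟩ := hrow a ha
      obtain ⟨b', hb', hba'⟩ := hrow a' ha'
      obtain rfl : b = b' := by omega
      omega
    have hx : ∀ a < n, h a ∈ Set.Icc ((n : ℤ) - 1 - a) (n - 1) := by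
      intro a ha
      have := hh a ha
      simp only [triangle, Set.mem_ofPred_eq] at this
      exact ⟨by omega, by omega⟩
    exact colPattern_congr (eq_sub_of_injOn_of_mem_Icc hx hinj)
  · rintro rfl
    exact ⟨dlineF_mem_colTransversals n,
      rot_smul_lineF n ▸ Finset.smul_mem_smul_finset (lineF_mem_colTransversals n)⟩

lemma Finset.card_union_union_add_three {α : Type*} [DecidableEq α] {X Y Z : Finset α} {a b c : α}
    (hXY : X ∩ Y = {a}) (hXZ : X ∩ Z = {b}) (hYZ : Y ∩ Z = {c}) (hbc : b ≠ c) :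
    (X ∪ Y ∪ Z).card + 3 = X.card + Y.card + Z.card := by
  have hXY' := Finset.card_union_add_card_inter X Y
  have hXYZ := Finset.card_union_add_card_inter (X ∪ Y) Z
  rw [hXY, Finset.card_singleton] at hXY'
  rw [Finset.union_inter_distrib_right, hXZ, hYZ, ← Finset.insert_eq, Finset.card_pair hbc] at hXYZ
  omega

lemma card_union_rot_smul_colTransversals {n : ℕ} (hn : 2 ≤ n) :
    (colTransversals n ∪ rot n • colTransversals n ∪ rot n • rot n • colTransversals n).card =
      3 * n.factorial - 3 := by
  set ρ := rot n
  set A := colTransversals n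
  have hAB : A ∩ ρ • A = {dlineF n} := colTransversals_inter_rot_smul n
  have hBC : ρ • A ∩ ρ • ρ • A = {ρ • dlineF n} := by
    rw [← Finset.smul_finset_inter, hAB, Finset.smul_finset_singleton]
  have hAC : A ∩ ρ • ρ • A = {ρ • ρ • dlineF n} := by
    have hA : ρ • ρ • ρ • A = A := by
      rw [smul_smul, smul_smul, ← pow_three', rot_pow_three, one_smul]
    calc A ∩ ρ • ρ • A = ρ • ρ • (ρ • A ∩ A) := by
          rw [Finset.smul_finset_inter, Finset.smul_finset_inter, hA]
      _ = {ρ • ρ • dlineF n} := by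
          rw [Finset.inter_comm, hAB, Finset.smul_finset_singleton, Finset.smul_finset_singleton]
  have hne : ρ • ρ • dlineF n ≠ ρ • dlineF n :=
    (MulAction.injective ρ).ne (rot_smul_dlineF_ne hn)
  have hcard := Finset.card_union_union_add_three hAB hAC hBC hne
  rw [Finset.card_smul_finset, Finset.card_smul_finset, Finset.card_smul_finset,
    card_colTransversals] at hcard
  omega

/-- the orbit of the line `L_n` contains at least `3·n! − 3`
patterns, for `n ≥ 2`. -/
theorem line_orbit_lower_bound (n : ℕ) (hn : 2 ≤ n) :
    ∃ S : Finset (Finset Pt),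
      S.card = 3 * Nat.factorial n - 3 ∧ ∀ P ∈ S, InOrbit (lineF n) P := by
  refine ⟨_, card_union_rot_smul_colTransversals hn, fun P hP => ?_⟩
  simp only [Finset.mem_union, Finset.mem_smul_finset] at hP
  rcases hP with (hP | ⟨Q, hQ, rfl⟩) | ⟨_, ⟨Q, hQ, rfl⟩, rfl⟩
  · exact inOrbit_lineF_of_mem_colTransversals hP
  · exact (inOrbit_lineF_of_mem_colTransversals hQ).rot_smul
  · exact (inOrbit_lineF_of_mem_colTransversals hQ).rot_smul.rot_smul
end
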